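/- arXiv:2507.02645 — 2 statements merged into one kernel-verified Lean document; each statement's English description precedes it below -/
import Mathlib

section
/- Let (Ω, ℱ, P) be a probability space, S and T nonempty finite types, X : Ω → S a measurable treatment variable, Z : Ω → T a measurable confounder, V a nonempty finite type, and Y : S → Ω → V a measurable family of potential outcomes. Define the observed outcome Y_obs(ω) := Y (X ω) ω (consistency). Assume positivity: P(X = x ∧ Z = z) > 0 for every x ∈ S and z ∈ T; and conditional ignorability: for every x ∈ S, z ∈ T and v ∈ V, P(Y x = v ∧ X = x ∣ Z = z) = P(Y x = v ∣ Z = z) · P(X = x ∣ Z = z), where P(· ∣ E) denotes conditional probability given the event E. Then for every x ∈ S and v ∈ V the interventional probability is identified by the back-door adjustment formula: P(Y x = v) = Σ_{z ∈ T} P(Y_obs = v ∣ X = x ∧ Z = z) · P(Z = z). -/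
open MeasureTheory ProbabilityTheory

/-- **Back-door adjustment formula** (Theorem 1), potential-outcomes form:
under consistency, positivity and conditional ignorability given the
confounder `Z`, the interventional probability `P(Y x = v)` is identified by
`∑ z, P(Y_obs = v ∣ X = x, Z = z) · P(Z = z)`. -/
theorem backdoor_adjustment
    {Ω : Type*} [MeasurableSpace Ω] (P : Measure Ω) [IsProbabilityMeasure P]
    {S T V : Type*}
    [Fintype S] [Nonempty S] [MeasurableSpace S] [MeasurableSingletonClass S]
    [Fintype T] [Nonempty T] [MeasurableSpace T] [MeasurableSingletonClass T]
    [Fintype V] [Nonempty V] [MeasurableSpace V] [MeasurableSingletonClass V]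
    (X : Ω → S) (hX : Measurable X)
    (Z : Ω → T) (hZ : Measurable Z)
    (Y : S → Ω → V) (hY : ∀ x, Measurable (Y x))
    (Yobs : Ω → V) (hYobs : ∀ ω, Yobs ω = Y (X ω) ω)
    (hpos : ∀ (x : S) (z : T), 0 < P {ω | X ω = x ∧ Z ω = z})
    (hignor : ∀ (x : S) (z : T) (v : V),
      P[|{ω | Z ω = z}] {ω | Y x ω = v ∧ X ω = x}
        = P[|{ω | Z ω = z}] {ω | Y x ω = v} * P[|{ω | Z ω = z}] {ω | X ω = x}) :
    ∀ (x : S) (v : V),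
      P {ω | Y x ω = v}
        = ∑ z : T,
            P[|{ω | X ω = x ∧ Z ω = z}] {ω | Yobs ω = v} * P {ω | Z ω = z} := by
  intro x v
  classical
  -- measurability facts
  have hBmeas : MeasurableSet {ω | Y x ω = v} := by
    have h : {ω | Y x ω = v} = (Y x) ⁻¹' {v} := by ext ω; simp
    rw [h]; exact (hY x) (measurableSet_singleton v)
  have hEmeas : ∀ z : T, MeasurableSet {ω | Z ω = z} := by
    intro z
    have h : {ω | Z ω = z} = Z ⁻¹' {z} := by ext ω; simp
    rw [h]; exact hZ (measurableSet_singleton z)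
  have hXmeas : MeasurableSet {ω | X ω = x} := by
    have h : {ω | X ω = x} = X ⁻¹' {x} := by ext ω; simp
    rw [h]; exact hX (measurableSet_singleton x)
  have hAmeas : ∀ z : T, MeasurableSet {ω | X ω = x ∧ Z ω = z} := by
    intro z
    have h : {ω | X ω = x ∧ Z ω = z} = {ω | X ω = x} ∩ {ω | Z ω = z} := by
      ext ω; simp [Set.mem_setOf_eq]
    rw [h]; exact hXmeas.inter (hEmeas z)
  -- partition over the values of Z
  have hd : Pairwise (Function.onFun Disjoint
      fun z : T => {ω | Y x ω = v} ∩ {ω | Z ω = z}) := by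
    intro i j hij
    rw [Function.onFun, Set.disjoint_left]
    rintro ω ⟨-, hi⟩ ⟨-, hj⟩
    exact hij ((show Z ω = i from hi).symm.trans (show Z ω = j from hj))
  have hm : ∀ z : T, MeasurableSet ({ω | Y x ω = v} ∩ {ω | Z ω = z}) :=
    fun z => hBmeas.inter (hEmeas z)
  have hU : {ω | Y x ω = v} = ⋃ z : T, {ω | Y x ω = v} ∩ {ω | Z ω = z} := by
    ext ω; simp
  have hpart : P {ω | Y x ω = v}
      = ∑ z : T, P ({ω | Y x ω = v} ∩ {ω | Z ω = z}) := by
    conv_lhs => rw [hU]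
    rw [measure_iUnion hd hm, tsum_fintype]
  rw [hpart]
  refine Finset.sum_congr rfl fun z _ => ?_
  have ha0 : P {ω | X ω = x ∧ Z ω = z} ≠ 0 := (hpos x z).ne'
  have haT : P {ω | X ω = x ∧ Z ω = z} ≠ ⊤ := measure_ne_top P _
  have hAsubE : {ω | X ω = x ∧ Z ω = z} ⊆ {ω | Z ω = z} := fun ω hω => hω.2
  have he0 : P {ω | Z ω = z} ≠ 0 := fun h =>
    ha0 (le_antisymm (h ▸ measure_mono hAsubE) zero_le)
  have heT : P {ω | Z ω = z} ≠ ⊤ := measure_ne_top P _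
  -- set identities
  have hYobsA : {ω | X ω = x ∧ Z ω = z} ∩ {ω | Yobs ω = v}
      = {ω | Y x ω = v} ∩ {ω | X ω = x ∧ Z ω = z} := by
    ext ω
    simp only [Set.mem_inter_iff, Set.mem_setOf_eq]
    constructor
    · rintro ⟨⟨h2, h3⟩, h1⟩; exact ⟨by rw [← h1, hYobs ω, h2], h2, h3⟩
    · rintro ⟨h1, h2, h3⟩; exact ⟨⟨h2, h3⟩, by rw [hYobs ω, h2, h1]⟩
  have hIGset : {ω | Z ω = z} ∩ {ω | Y x ω = v ∧ X ω = x}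
      = {ω | Y x ω = v} ∩ {ω | X ω = x ∧ Z ω = z} := by
    ext ω
    simp only [Set.mem_inter_iff, Set.mem_setOf_eq]
    tauto
  have hBE : {ω | Z ω = z} ∩ {ω | Y x ω = v}
      = {ω | Y x ω = v} ∩ {ω | Z ω = z} := Set.inter_comm _ _
  have hXE : {ω | Z ω = z} ∩ {ω | X ω = x} = {ω | X ω = x ∧ Z ω = z} := by
    ext ω
    simp only [Set.mem_inter_iff, Set.mem_setOf_eq]
    tauto
  -- unfold conditional probabilities in ignorability
  have hig := hignor x z v
  rw [cond_apply (hEmeas z), cond_apply (hEmeas z), cond_apply (hEmeas z),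
    hIGset, hBE, hXE] at hig
  have hr : P ({ω | Y x ω = v} ∩ {ω | X ω = x ∧ Z ω = z})
      = P ({ω | Y x ω = v} ∩ {ω | Z ω = z})
        * ((P {ω | Z ω = z})⁻¹ * P {ω | X ω = x ∧ Z ω = z}) := by
    have h := congrArg (fun t => P {ω | Z ω = z} * t) hig
    simpa [← mul_assoc, ENNReal.mul_inv_cancel he0 heT] using h
  rw [cond_apply (hAmeas z), hYobsA, hr]
  calc P ({ω | Y x ω = v} ∩ {ω | Z ω = z})
      = P ({ω | Y x ω = v} ∩ {ω | Z ω = z})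
        * ((P {ω | X ω = x ∧ Z ω = z})⁻¹ * P {ω | X ω = x ∧ Z ω = z})
        * ((P {ω | Z ω = z})⁻¹ * P {ω | Z ω = z}) := by
        rw [ENNReal.inv_mul_cancel ha0 haT, ENNReal.inv_mul_cancel he0 heT,
          mul_one, mul_one]
    _ = (P {ω | X ω = x ∧ Z ω = z})⁻¹
        * (P ({ω | Y x ω = v} ∩ {ω | Z ω = z})
            * ((P {ω | Z ω = z})⁻¹ * P {ω | X ω = x ∧ Z ω = z}))
        * P {ω | Z ω = z} := by ring
end

section
/- Let (Ω, ℱ, P) be a probability space, T a nonempty finite type, F : Ω → Bool a measurable binary treatment, Z : Ω → T a measurable confounder, and Y₀, Y₁ : Ω → ℝ bounded measurable potential outcomes. Define the observed outcome Y_obs(ω) := if F ω then Y₁ ω else Y₀ ω (consistency). Assume positivity: P(F = b ∧ Z = z) > 0 for every b ∈ Bool and z ∈ T; and conditional ignorability: for every b ∈ Bool and z ∈ T, the random variable Y_b is independent of the event {F = b} under the conditional measure P(· ∣ Z = z), i.e. for every Borel set B ⊆ ℝ, P(Y_b ∈ B ∧ F = b ∣ Z = z) = P(Y_b ∈ B ∣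 Z = z) · P(F = b ∣ Z = z). Then the average causal effect ACE := E[Y₁] − E[Y₀] satisfies ACE = Σ_{z ∈ T} ( E[Y_obs ∣ F = true ∧ Z = z] − E[Y_obs ∣ F = false ∧ Z = z] ) · P(Z = z), where E[· ∣ E] denotes expectation with respect to the conditional measure P(· ∣ E). -/
open MeasureTheory ProbabilityTheory
open scoped ENNReal

lemma aux_cond_def {Ω : Type*} [MeasurableSpace Ω] (μ : Measure Ω) (s : Set Ω) :
    μ[|s] = (μ s)⁻¹ • μ.restrict s := rfl

lemma aux_restrict_integral {Ω : Type*} [MeasurableSpace Ω] (μ : Measure Ω)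
    (Y : Ω → ℝ) (hY : Measurable Y)
    (S : Set Ω)
    (hind : ∀ B : Set ℝ, MeasurableSet B → μ (Y ⁻¹' B ∩ S) = μ (Y ⁻¹' B) * μ S) :
    ∫ ω in S, Y ω ∂μ = (μ S).toReal * ∫ ω, Y ω ∂μ := by
  have hmap : (μ.restrict S).map Y = (μ S) • μ.map Y := by
    ext B hB
    rw [Measure.map_apply hY hB, Measure.restrict_apply (hY hB), hind B hB,
      Measure.smul_apply, Measure.map_apply hY hB, smul_eq_mul, mul_comm]
  calc ∫ ω in S, Y ω ∂μ = ∫ x, id x ∂((μ.restrict S).map Y) := by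
        rw [integral_map hY.aemeasurable aestronglyMeasurable_id]; rfl
    _ = (μ S).toReal * ∫ x, id x ∂(μ.map Y) := by
        rw [hmap, integral_smul_measure, smul_eq_mul]
    _ = (μ S).toReal * ∫ ω, Y ω ∂μ := by
        rw [integral_map hY.aemeasurable aestronglyMeasurable_id]; rfl

/-- **Back-door identification of the Average Causal Effect**: for a binary
treatment `F` with bounded potential outcomes `Y₀, Y₁`, under consistency,
positivity and conditional ignorability given the confounder `Z`,
`ACE = E[Y₁] − E[Y₀]` equals the `P(Z = z)`-weighted sum over strata of the
differences of conditional means of the observed outcome between treated and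
untreated groups. -/
theorem ace_backdoor_adjustment
    {Ω : Type*} [MeasurableSpace Ω] (P : Measure Ω) [IsProbabilityMeasure P]
    {T : Type*} [Fintype T] [Nonempty T] [MeasurableSpace T] [MeasurableSingletonClass T]
    (F : Ω → Bool) (hF : Measurable F)
    (Z : Ω → T) (hZ : Measurable Z)
    (Y₀ Y₁ : Ω → ℝ) (hY₀ : Measurable Y₀) (hY₁ : Measurable Y₁)
    (hbdd : ∃ C : ℝ, ∀ ω, |Y₀ ω| ≤ C ∧ |Y₁ ω| ≤ C)
    (Yobs : Ω → ℝ) (hYobs : ∀ ω, Yobs ω = if F ω then Y₁ ω else Y₀ ω)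
    (hpos : ∀ (b : Bool) (z : T), 0 < P {ω | F ω = b ∧ Z ω = z})
    (hignor : ∀ (b : Bool) (z : T) (B : Set ℝ), MeasurableSet B →
      P[|{ω | Z ω = z}] {ω | (if b then Y₁ else Y₀) ω ∈ B ∧ F ω = b}
        = P[|{ω | Z ω = z}] {ω | (if b then Y₁ else Y₀) ω ∈ B}
          * P[|{ω | Z ω = z}] {ω | F ω = b}) :
    (∫ ω, Y₁ ω ∂P) - (∫ ω, Y₀ ω ∂P)
      = ∑ z : T,
          ((∫ ω, Yobs ω ∂(P[|{ω | F ω = true ∧ Z ω = z}]))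
            - (∫ ω, Yobs ω ∂(P[|{ω | F ω = false ∧ Z ω = z}])))
          * (P {ω | Z ω = z}).toReal := by
  obtain ⟨C, hC⟩ := hbdd
  -- measurability of the basic events
  have hSz : ∀ z : T, MeasurableSet {ω | Z ω = z} := fun z =>
    hZ (measurableSet_singleton z)
  have hFb : ∀ b : Bool, MeasurableSet {ω | F ω = b} := fun b =>
    hF (measurableSet_singleton b)
  -- positivity of strata
  have hPz : ∀ z : T, 0 < P {ω | Z ω = z} := by
    intro z
    refine lt_of_lt_of_le (hpos true z) (measure_mono ?_)
    intro ω hω; exact hω.2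
  have hPz_ne : ∀ z : T, P {ω | Z ω = z} ≠ 0 := fun z => (hPz z).ne'
  have hPz_top : ∀ z : T, P {ω | Z ω = z} ≠ ∞ := fun z => measure_ne_top P _
  -- conditional measures on strata are probability measures
  haveI hprob : ∀ z : T, IsProbabilityMeasure (P[|{ω | Z ω = z}]) := fun z =>
    cond_isProbabilityMeasure (hPz_ne z)
  -- bounds for the potential outcomes
  have hYbM : ∀ b : Bool, Measurable (if b then Y₁ else Y₀) := by
    intro b; cases b <;> simpa
  have hYbC : ∀ (b : Bool) (ω : Ω), ‖(if b then Y₁ else Y₀) ω‖ ≤ C := by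
    intro b ω; cases b <;> simp [Real.norm_eq_abs, (hC ω).1, (hC ω).2]
  have hint : ∀ (b : Bool) (μ : Measure Ω) [IsFiniteMeasure μ],
      Integrable (if b then Y₁ else Y₀) μ := by
    intro b μ _
    exact (integrable_const C).mono' (hYbM b).aestronglyMeasurable
      (Filter.Eventually.of_forall (hYbC b))
  -- positive conditional probability of {F = b} given stratum
  have hcondF : ∀ (b : Bool) (z : T), P[|{ω | Z ω = z}] {ω | F ω = b} ≠ 0 := by
    intro b z
    rw [cond_apply (hSz z)]
    refine (ENNReal.mul_pos ?_ ?_).ne'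
    · exact ENNReal.inv_ne_zero.mpr (hPz_top z)
    · refine (lt_of_lt_of_le (hpos b z) (measure_mono ?_)).ne'
      intro ω hω; exact ⟨hω.2, hω.1⟩
  have hcondF_top : ∀ (b : Bool) (z : T), P[|{ω | Z ω = z}] {ω | F ω = b} ≠ ∞ :=
    fun b z => measure_ne_top _ _
  -- Key lemma A
  have keyA : ∀ (b : Bool) (z : T),
      ∫ ω, Yobs ω ∂(P[|{ω | F ω = b ∧ Z ω = z}])
        = ∫ ω, (if b then Y₁ else Y₀) ω ∂(P[|{ω | Z ω = z}]) := by
    intro b z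
    have hset : {ω | F ω = b ∧ Z ω = z} = {ω | Z ω = z} ∩ {ω | F ω = b} := by
      ext ω; exact and_comm
    rw [hset, ← cond_cond_eq_cond_inter (hSz z) (hFb b)]
    set μ := P[|{ω | Z ω = z}] with hμ
    haveI : IsProbabilityMeasure μ := hprob z
    set Yb := (fun ω => if b then Y₁ ω else Y₀ ω) with hYbdef
    have hYbM' : Measurable Yb := by cases b <;> simpa [hYbdef]
    -- replace Yobs by Yb on the conditional measure
    have h1 : ∫ ω, Yobs ω ∂(μ[|{ω | F ω = b}]) = ∫ ω, Yb ω ∂(μ[|{ω | F ω = b}]) := by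
      refine integral_congr_ae ?_
      rw [aux_cond_def]
      refine Filter.Eventually.filter_mono (Measure.ae_smul_measure_le _) ?_
      rw [ae_restrict_iff' (hFb b)]
      refine Filter.Eventually.of_forall fun ω hω => ?_
      simp only [Set.mem_setOf_eq] at hω
      simp [hYobs, hYbdef, hω]
    rw [h1]
    -- compute the conditional integral
    have h2 : ∫ ω, Yb ω ∂(μ[|{ω | F ω = b}])
        = (μ {ω | F ω = b}).toReal⁻¹ * ∫ ω in {ω | F ω = b}, Yb ω ∂μ := by
      rw [aux_cond_def, integral_smul_measure, ENNReal.toReal_inv, smul_eq_mul]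
    have h3 : ∫ ω in {ω | F ω = b}, Yb ω ∂μ
        = (μ {ω | F ω = b}).toReal * ∫ ω, Yb ω ∂μ := by
      refine aux_restrict_integral μ Yb hYbM' _ ?_
      intro B hB
      have := hignor b z B hB
      have e1 : {ω | (if b then Y₁ else Y₀) ω ∈ B ∧ F ω = b} = Yb ⁻¹' B ∩ {ω | F ω = b} := by
        ext ω; cases b <;> simp [hYbdef, Set.mem_setOf_eq]
      have e2 : {ω | (if b then Y₁ else Y₀) ω ∈ B} = Yb ⁻¹' B := by
        ext ω; cases b <;> simp [hYbdef]
      rw [e1, e2] at this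
      exact this
    rw [h2, h3, ← mul_assoc,
      inv_mul_cancel₀ (ENNReal.toReal_ne_zero.mpr ⟨hcondF b z, hcondF_top b z⟩), one_mul]
    cases b <;> rfl
  -- Key lemma B : law of total expectation
  have keyB : ∀ (Y : Ω → ℝ), Measurable Y → (∀ ω, ‖Y ω‖ ≤ C) →
      ∫ ω, Y ω ∂P = ∑ z : T, (∫ ω, Y ω ∂(P[|{ω | Z ω = z}])) * (P {ω | Z ω = z}).toReal := by
    intro Y hY hYC
    have hintY : Integrable Y P :=
      (integrable_const C).mono' hY.aestronglyMeasurable (Filter.Eventually.of_forall hYC)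
    have step1 : ∫ ω, Y ω ∂P = ∑ z : T, ∫ ω in {ω | Z ω = z}, Y ω ∂P := by
      have hsum : ∀ ω, Y ω = ∑ z : T, Set.indicator {ω' | Z ω' = z} Y ω := by
        intro ω
        rw [Finset.sum_eq_single (Z ω)]
        · simp [Set.indicator_of_mem, Set.mem_setOf_eq]
        · intro z _ hz
          exact Set.indicator_of_notMem (by simpa using (Ne.symm hz)) Y
        · intro h; exact absurd (Finset.mem_univ _) h
      calc ∫ ω, Y ω ∂P = ∫ ω, ∑ z : T, Set.indicator {ω' | Z ω' = z} Y ω ∂P := by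
            exact integral_congr_ae (Filter.Eventually.of_forall hsum)
        _ = ∑ z : T, ∫ ω, Set.indicator {ω' | Z ω' = z} Y ω ∂P :=
            integral_finset_sum _ (fun z _ => hintY.indicator (hSz z))
        _ = ∑ z : T, ∫ ω in {ω | Z ω = z}, Y ω ∂P := by
            refine Finset.sum_congr rfl fun z _ => ?_
            exact integral_indicator (hSz z)
    rw [step1]
    refine Finset.sum_congr rfl fun z _ => ?_
    have hne : (P {ω | Z ω = z}).toReal ≠ 0 :=
      ENNReal.toReal_ne_zero.mpr ⟨hPz_ne z, hPz_top z⟩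
    rw [aux_cond_def, integral_smul_measure, ENNReal.toReal_inv, smul_eq_mul,
      mul_comm ((P {ω | Z ω = z}).toReal⁻¹) _, mul_assoc, inv_mul_cancel₀ hne, mul_one]
  -- put everything together
  have hB1 := keyB Y₁ hY₁ (fun ω => by simpa [Real.norm_eq_abs] using (hC ω).2)
  have hB0 := keyB Y₀ hY₀ (fun ω => by simpa [Real.norm_eq_abs] using (hC ω).1)
  rw [hB1, hB0, ← Finset.sum_sub_distrib]
  refine Finset.sum_congr rfl fun z _ => ?_
  have hA1 := keyA true z
  have hA0 := keyA false z
  simp only [if_true, Bool.false_eq_true, if_false] at hA1 hA0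
  rw [hA1, hA0, sub_mul]
end
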